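/- arXiv:2601.17306 — 2 statements merged into one kernel-verified Lean document; each statement's English description precedes it below -/
import Mathlib

section
/- Let t > 0 and let h₀ : ℝ² → [0,∞) be measurable such that ∫_{ℝ²} (1+‖y‖) h₀(y) g_t(z−y) dy < ∞ for every z ∈ ℝ². Then the function x ↦ ∫_{ℝ²} h₀(y) g_t(x−y) dy is differentiable on ℝ², and for every x ∈ ℝ² the ℝ²-valued identity ∫_{ℝ²} y · h₀(y) · g_t(x−y) dy = (∫_{ℝ²} h₀(y) g_t(x−y) dy) · x + t · ∇_x (∫_{ℝ²} h₀(y) g_t(x−y) dy) holds, where ∇_x denotes the gradient in x. -/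
open MeasureTheory Real

noncomputable section

/-- The plane `ℝ²`. -/
abbrev E2 := EuclideanSpace ℝ (Fin 2)

/-- The two-dimensional Gaussian heat kernel `g_t(x) = (2πt)⁻¹ exp(−‖x‖²/(2t))`. -/
def gauss (t : ℝ) (x : E2) : ℝ := (2 * π * t)⁻¹ * Real.exp (-‖x‖ ^ 2 / (2 * t))

/-!
Differentiating under the integral sign with `∇ₓ g_t(x - y) = g_t(x - y) (y - x) / t` gives
`t ∇(h₀ * g_t)(x) = ∫ (y - x) h₀(y) g_t(x - y) dy`, which is the identity. The domination on a
ball `‖x - x₀‖ ≤ 1` comes from the hypothesis at the four points `x₀ ± 2 eᵢ`: for every `y` one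
of them, `x₀ + 2u`, has `‖y - x₀‖ ≤ 2 ⟪u, y - x₀⟫`, and then
`g_t(x - y) ≤ e^{2/t} g_t(x₀ + 2u - y)`.
-/

open RealInnerProductSpace

section Moments

variable {E : Type*} [NormedAddCommGroup E] [MeasurableSpace E] [OpensMeasurableSpace E]
  [SecondCountableTopology E] {μ : Measure E} {f : E → ℝ}

lemma Integrable.of_one_add_norm_mul (hf : Integrable (fun y ↦ (1 + ‖y‖) * f y) μ) :
    Integrable f μ := by
  have hpos (y : E) : 0 < 1 + ‖y‖ := by positivity
  refine (hf.bdd_mul (c := 1) (by fun_prop) (.of_forall fun y ↦ ?_)).congr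
    (.of_forall fun y ↦ inv_mul_cancel_left₀ (hpos y).ne' (f y))
  rw [norm_inv, Real.norm_of_nonneg (hpos y).le]
  exact inv_le_one_of_one_le₀ (by simp)

lemma Integrable.smul_id_of_one_add_norm_mul [NormedSpace ℝ E]
    (hf : Integrable (fun y ↦ (1 + ‖y‖) * f y) μ) :
    Integrable (fun y ↦ f y • y) μ := by
  have hpos (y : E) : 0 < 1 + ‖y‖ := by positivity
  refine (hf.smul_bdd (C := 1) (f := fun y ↦ (1 + ‖y‖)⁻¹ • y) (by fun_prop)
    (.of_forall fun y ↦ ?_)).congr (.of_forall fun y ↦ ?_)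
  · rw [norm_smul, norm_inv, Real.norm_of_nonneg (hpos y).le, inv_mul_le_one₀ (hpos y)]
    simp
  · simp only [Pi.smul_apply', smul_smul]
    rw [mul_comm, ← mul_assoc, inv_mul_cancel₀ (hpos y).ne', one_mul]

end Moments

lemma norm_add_two_smul_sub_sq_le {E : Type*} [NormedAddCommGroup E] [InnerProductSpace ℝ E]
    {x₀ x y u : E} (hu : ‖u‖ ≤ 1) (hx : ‖x - x₀‖ ≤ 1)
    (hy : ‖y - x₀‖ ≤ 2 * ⟪u, y - x₀⟫) : ‖x₀ + (2 : ℝ) • u - y‖ ^ 2 ≤ ‖x - y‖ ^ 2 + 4 := by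
  have hexpand : ‖x₀ + (2 : ℝ) • u - y‖ ^ 2 = 4 * ‖u‖ ^ 2 - 4 * ⟪u, y - x₀⟫ + ‖y - x₀‖ ^ 2 := by
    rw [show x₀ + (2 : ℝ) • u - y = (2 : ℝ) • u - (y - x₀) by abel, norm_sub_sq_real,
      norm_smul, inner_smul_left]
    simp only [norm_ofNat, ringHom_apply, add_left_inj]; ring
  have hfar : ‖y - x₀‖ - 1 ≤ ‖x - y‖ := by
    have := norm_sub_le_norm_sub_add_norm_sub y x x₀
    rw [norm_sub_rev y x] at this; linarith
  have hfar_sq : ‖y - x₀‖ ^ 2 - 2 * ‖y - x₀‖ ≤ ‖x - y‖ ^ 2 := by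
    rcases le_total 1 ‖y - x₀‖ with h | h
    · nlinarith [pow_le_pow_left₀ (by linarith) hfar 2]
    · nlinarith [norm_nonneg (x - y), norm_nonneg (y - x₀)]
  nlinarith [pow_le_one₀ (n := 2) (norm_nonneg u) hu]

lemma gauss_nonneg {t : ℝ} (ht : 0 ≤ t) (x : E2) : 0 ≤ gauss t x := by
  unfold gauss; positivity

lemma hasFDerivAt_gauss_sub (t : ℝ) (x y : E2) :
    HasFDerivAt (fun x ↦ gauss t (x - y)) (innerSL ℝ ((gauss t (x - y) / t) • (y - x))) x := by
  have hsq : HasFDerivAt (fun x ↦ ‖x - y‖ ^ 2) ((2 : ℝ) • innerSL ℝ (x - y)) x :=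
    ((hasFDerivAt_id x).sub_const y).norm_sq.congr_fderiv (by ext v; simp [two_smul])
  have h := (hsq.const_mul (-(2 * t)⁻¹)).exp.const_mul (2 * π * t)⁻¹
  refine (h.congr_of_eventuallyEq (.of_forall fun z ↦ ?_)).congr_fderiv ?_
  · rw [gauss]; congr 2; ring
  · ext v
    rw [gauss, show -‖x - y‖ ^ 2 / (2 * t) = -(2 * t)⁻¹ * ‖x - y‖ ^ 2 by ring]
    simp only [mul_inv_rev, neg_mul, map_sub, neg_smul, smul_neg, neg_apply,
      smul_apply, sub_apply, coe_innerSL_apply,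
      smul_eq_mul, map_smul]
    ring

lemma gauss_le_exp_mul_gauss {t c : ℝ} (ht : 0 < t) {a b : E2} (hab : ‖a‖ ^ 2 ≤ ‖b‖ ^ 2 + c) :
    gauss t b ≤ exp (c / (2 * t)) * gauss t a := by
  rw [gauss, gauss, mul_left_comm, ← exp_add, ← add_div]
  gcongr
  linarith

def axisDirections : Finset E2 :=
  {EuclideanSpace.single 0 1, EuclideanSpace.single 0 (-1),
    EuclideanSpace.single 1 1, EuclideanSpace.single 1 (-1)}

lemma norm_le_one_of_mem_axisDirections {u : E2} (hu : u ∈ axisDirections) : ‖u‖ ≤ 1 := by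
  simp only [axisDirections, Finset.mem_insert, Finset.mem_singleton] at hu
  rcases hu with rfl | rfl | rfl | rfl <;> simp

lemma exists_mem_axisDirections_norm_le (v : E2) :
    ∃ u ∈ axisDirections, ‖v‖ ≤ 2 * ⟪u, v⟫ := by
  have hnorm : ‖v‖ ≤ |v 0| + |v 1| := by
    refine (pow_le_pow_iff_left₀ (norm_nonneg v) (by positivity) two_ne_zero).mp ?_
    rw [EuclideanSpace.real_norm_sq_eq, Fin.sum_univ_two, ← sq_abs (v 0), ← sq_abs (v 1)]
    nlinarith [abs_nonneg (v 0), abs_nonneg (v 1)]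
  have key (i : Fin 2) : ∃ u ∈ axisDirections, ⟪u, v⟫ = |v i| := by
    rcases abs_choice (v i) with h | h
    · exact ⟨EuclideanSpace.single i 1, by fin_cases i <;> simp [axisDirections],
        by simp [EuclideanSpace.inner_single_left, h]⟩
    · exact ⟨EuclideanSpace.single i (-1), by fin_cases i <;> simp [axisDirections],
        by simp [EuclideanSpace.inner_single_left, h]⟩
  rcases le_total |v 1| |v 0| with h | h
  · obtain ⟨u, hu, huv⟩ := key 0
    exact ⟨u, hu, by linarith⟩
  · obtain ⟨u, hu, huv⟩ := key 1
    exact ⟨u, hu, by linarith⟩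

lemma gauss_sub_le_sum_axisDirections {t : ℝ} (ht : 0 < t) {x₀ x : E2} (hx : ‖x - x₀‖ ≤ 1)
    (y : E2) :
    gauss t (x - y) ≤ exp (2 / t) * ∑ u ∈ axisDirections, gauss t (x₀ + (2 : ℝ) • u - y) := by
  obtain ⟨u, hu, huy⟩ := exists_mem_axisDirections_norm_le (y - x₀)
  have hcmp := gauss_le_exp_mul_gauss (t := t) ht
    (norm_add_two_smul_sub_sq_le (norm_le_one_of_mem_axisDirections hu) hx huy)
  rw [show (4 : ℝ) / (2 * t) = 2 / t by field_simp; norm_num] at hcmp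
  refine hcmp.trans ?_
  gcongr
  exact Finset.single_le_sum (f := fun u ↦ gauss t (x₀ + (2 : ℝ) • u - y))
    (fun u _ ↦ gauss_nonneg ht.le _) hu

lemma norm_sub_mul_gauss_sub_le {t : ℝ} (ht : 0 < t) {x₀ x : E2} (hx : ‖x - x₀‖ ≤ 1) (y : E2) :
    ‖y - x‖ * gauss t (x - y) ≤ (1 + ‖x₀‖) * exp (2 / t) *
      ∑ u ∈ axisDirections, (1 + ‖y‖) * gauss t (x₀ + (2 : ℝ) • u - y) := by
  have hyx : ‖y - x‖ ≤ (1 + ‖x₀‖) * (1 + ‖y‖) := by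
    calc ‖y - x‖ ≤ ‖y‖ + ‖x - x₀‖ + ‖x₀‖ := by
          rw [show y - x = y - (x - x₀) - x₀ by abel]
          exact (norm_sub_le _ _).trans (by gcongr; exact norm_sub_le _ _)
      _ ≤ (1 + ‖x₀‖) * (1 + ‖y‖) := by nlinarith [norm_nonneg x₀, norm_nonneg y]
  rw [← Finset.mul_sum]
  calc ‖y - x‖ * gauss t (x - y)
      ≤ ((1 + ‖x₀‖) * (1 + ‖y‖)) *
          (exp (2 / t) * ∑ u ∈ axisDirections, gauss t (x₀ + (2 : ℝ) • u - y)) :=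
        mul_le_mul hyx (gauss_sub_le_sum_axisDirections ht hx y) (gauss_nonneg ht.le _)
          (by positivity)
    _ = _ := by ring

section Convolution

variable {t : ℝ} {h₀ : E2 → ℝ}
  (hint : ∀ z : E2, Integrable (fun y : E2 => (1 + ‖y‖) * h₀ y * gauss t (z - y)))
include hint

lemma integrable_mul_gauss_sub (x : E2) : Integrable (fun y ↦ h₀ y * gauss t (x - y)) :=
  Integrable.of_one_add_norm_mul (by simpa only [mul_assoc] using hint x)

lemma integrable_mul_gauss_sub_smul (x : E2) :
    Integrable (fun y ↦ (h₀ y * gauss t (x - y)) • y) :=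
  Integrable.smul_id_of_one_add_norm_mul (by simpa only [mul_assoc] using hint x)

lemma integrable_mul_gauss_sub_smul_sub (x : E2) :
    Integrable (fun y ↦ (h₀ y * gauss t (x - y)) • (y - x)) := by
  simp_rw [smul_sub]
  exact (integrable_mul_gauss_sub_smul hint x).sub ((integrable_mul_gauss_sub hint x).smul_const x)

lemma integral_mul_gauss_sub_smul_sub (x : E2) :
    ∫ y, (h₀ y * gauss t (x - y)) • (y - x)
      = (∫ y, (h₀ y * gauss t (x - y)) • y) - (∫ y, h₀ y * gauss t (x - y)) • x := by
  simp_rw [smul_sub]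
  rw [integral_sub (integrable_mul_gauss_sub_smul hint x)
    ((integrable_mul_gauss_sub hint x).smul_const x), integral_smul_const]

theorem hasGradientAt_integral_mul_gauss_sub (ht : 0 < t) (x₀ : E2) :
    HasGradientAt (fun x ↦ ∫ y, h₀ y * gauss t (x - y))
      (t⁻¹ • ∫ y, (h₀ y * gauss t (x₀ - y)) • (y - x₀)) x₀ := by
  have hmoment : Integrable fun y ↦ t⁻¹ • (h₀ y * gauss t (x₀ - y)) • (y - x₀) :=
    (integrable_mul_gauss_sub_smul_sub hint x₀).smul t⁻¹
  have hderiv : HasFDerivAt (fun x ↦ ∫ y, h₀ y * gauss t (x - y))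
      (∫ y, innerSL ℝ (t⁻¹ • (h₀ y * gauss t (x₀ - y)) • (y - x₀))) x₀ := by
    refine hasFDerivAt_integral_of_dominated_of_fderiv_le
      (F' := fun x y ↦ innerSL ℝ (t⁻¹ • (h₀ y * gauss t (x - y)) • (y - x)))
      (bound := fun y ↦ (1 + ‖x₀‖) * exp (2 / t) / t *
        ∑ u ∈ axisDirections, ‖(1 + ‖y‖) * h₀ y * gauss t (x₀ + (2 : ℝ) • u - y)‖)
      (Metric.ball_mem_nhds x₀ one_pos)
      (.of_forall fun x ↦ (integrable_mul_gauss_sub hint x).aestronglyMeasurable)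
      (integrable_mul_gauss_sub hint x₀)
      ((innerSL ℝ).continuous.comp_aestronglyMeasurable
        hmoment.aestronglyMeasurable)
      (.of_forall fun y x hx ↦ ?_)
      ((integrable_finsetSum _ fun u _ ↦ (hint _).norm).const_mul _)
      (.of_forall fun y x _ ↦ ?_)
    · have hx' : ‖x - x₀‖ ≤ 1 := by rw [← dist_eq_norm]; exact (Metric.mem_ball.mp hx).le
      have hsum : ∑ u ∈ axisDirections, ‖(1 + ‖y‖) * h₀ y * gauss t (x₀ + (2 : ℝ) • u - y)‖
          = ‖h₀ y‖ * ∑ u ∈ axisDirections, (1 + ‖y‖) * gauss t (x₀ + (2 : ℝ) • u - y) := by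
        rw [Finset.mul_sum]
        refine Finset.sum_congr rfl fun u _ ↦ ?_
        rw [norm_mul, norm_mul, Real.norm_of_nonneg (by positivity),
          Real.norm_of_nonneg (gauss_nonneg ht.le _)]
        ring
      rw [hsum, innerSL_apply_norm, norm_smul, norm_smul, norm_mul, norm_inv,
        Real.norm_of_nonneg ht.le, Real.norm_of_nonneg (gauss_nonneg ht.le _)]
      calc t⁻¹ * (‖h₀ y‖ * gauss t (x - y) * ‖y - x‖)
          = t⁻¹ * ‖h₀ y‖ * (‖y - x‖ * gauss t (x - y)) := by ring
        _ ≤ t⁻¹ * ‖h₀ y‖ * ((1 + ‖x₀‖) * exp (2 / t) *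
            ∑ u ∈ axisDirections, (1 + ‖y‖) * gauss t (x₀ + (2 : ℝ) • u - y)) :=
          mul_le_mul_of_nonneg_left (norm_sub_mul_gauss_sub_le ht hx' y) (by positivity)
        _ = _ := by ring
    · refine ((hasFDerivAt_gauss_sub t x y).const_mul (h₀ y)).congr_fderiv ?_
      rw [← map_smul, smul_smul, smul_smul]
      congr 2
      ring
  rw [ContinuousLinearMap.integral_comp_comm _ hmoment, integral_smul] at hderiv
  exact hderiv

end Convolution

theorem hat_convolution_identity_general
    (t : ℝ) (ht : 0 < t) (h₀ : E2 → ℝ)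
    (hint : ∀ z : E2, Integrable (fun y : E2 => (1 + ‖y‖) * h₀ y * gauss t (z - y))) :
    Differentiable ℝ (fun x : E2 => ∫ y : E2, h₀ y * gauss t (x - y)) ∧
    ∀ x : E2,
      (∫ y : E2, (h₀ y * gauss t (x - y)) • y)
        = (∫ y : E2, h₀ y * gauss t (x - y)) • x
          + t • gradient (fun x' : E2 => ∫ y : E2, h₀ y * gauss t (x' - y)) x := by
  refine ⟨fun x ↦ (hasGradientAt_integral_mul_gauss_sub hint ht x).differentiableAt, fun x ↦ ?_⟩
  rw [(hasGradientAt_integral_mul_gauss_sub hint ht x).gradient, smul_smul,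
    mul_inv_cancel₀ ht.ne', one_smul, integral_mul_gauss_sub_smul_sub hint x]
  abel

/-- For a nonnegative measurable `h₀` with a first-moment integrability
condition against the heat kernel, the convolution `x ↦ (h₀ * g_t)(x)` is differentiable
and the vector-valued identity `(ĥ₀ * g_t)(x) = (h₀ * g_t)(x) · x + t · ∇(h₀ * g_t)(x)`
holds, where `ĥ₀(y) = y h₀(y)`. -/
theorem hat_convolution_identity
    (t : ℝ) (ht : 0 < t) (h₀ : E2 → ℝ)
    (hmeas : Measurable h₀) (hnn : ∀ y : E2, 0 ≤ h₀ y)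
    (hint : ∀ z : E2, Integrable (fun y : E2 => (1 + ‖y‖) * h₀ y * gauss t (z - y))) :
    Differentiable ℝ (fun x : E2 => ∫ y : E2, h₀ y * gauss t (x - y)) ∧
    ∀ x : E2,
      (∫ y : E2, (h₀ y * gauss t (x - y)) • y)
        = (∫ y : E2, h₀ y * gauss t (x - y)) • x
          + t • gradient (fun x' : E2 => ∫ y : E2, h₀ y * gauss t (x' - y)) x :=
  hat_convolution_identity_general t ht h₀ hint
end
end

section
/- For all t > 0, ϑ > 0 and x ∈ ℝ² ∖ {0}, the ℝ²-valued identity ∫_{ℝ²} y · K₀(√(2ϑ)‖y‖) · g_t(x−y) dy = e^{ϑ t} · ( K₀(√(2ϑ)‖x‖, ϑ t) · x − √(2ϑ) · t · K₁(√(2ϑ)‖x‖, ϑ t) · (x/‖x‖) ) holds. -/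
open MeasureTheory Real

noncomputable section

/-- The modified Bessel function of the second kind of order 0,
`K₀(z) = (1/2) ∫₀^∞ a⁻¹ exp(−a − z²/(4a)) da`. -/
def besselK0 (z : ℝ) : ℝ :=
  (1 / 2 : ℝ) * ∫ a in Set.Ioi (0 : ℝ), a⁻¹ * Real.exp (-a - z ^ 2 / (4 * a))

/-- The incomplete modified Bessel function of the second kind of order `ν`,
`K_ν(z,y) = (1/2)(z/2)^ν ∫_y^∞ a^{−ν−1} exp(−a − z²/(4a)) da`. -/
def besselKInc (ν z y : ℝ) : ℝ :=
  (1 / 2 : ℝ) * (z / 2) ^ ν *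
    ∫ a in Set.Ioi y, a ^ (-ν - 1) * Real.exp (-a - z ^ 2 / (4 * a))

/-! Subordination writes `K₀(√(2ϑ)‖y‖) = π ∫₀^∞ e^{-ϑs} g_s(y) ds`, so by Fubini the left side
is `π ∫₀^∞ e^{-ϑs} ∫ g_s(y) g_t(x-y) y dy ds`. Completing the square,
`g_s(y) g_t(x-y) = g_{s+t}(x) g_{st/(s+t)}(y - s/(s+t) x)`, so the inner integral is `g_{s+t}(x)`
times the mean `s/(s+t) x` of a Gaussian. The substitution `a = ϑ(s+t)` turns the remaining
scalar integral into `e^{ϑt} ½ ∫_{ϑt}^∞ (a - ϑt) a⁻² e^{-a - z²/(4a)} da` with `z = √(2ϑ)‖x‖`,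
which splits into the two incomplete Bessel functions. -/

open Set

section GaussianOnNormedSpace

variable {E : Type*} [NormedAddCommGroup E] [NormedSpace ℝ E]

theorem integrable_norm_pow_mul_exp_neg_mul_sq_norm [FiniteDimensional ℝ E] [MeasurableSpace E]
    [BorelSpace E] [Nontrivial E] (μ : Measure E) [μ.IsAddHaarMeasure] {b : ℝ} (hb : 0 < b)
    (n : ℕ) : Integrable (fun v : E => ‖v‖ ^ n * rexp (-b * ‖v‖ ^ 2)) μ := by
  rw [integrable_fun_norm_addHaar μ (f := fun r => r ^ n * rexp (-b * r ^ 2))]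
  have hs : (-1 : ℝ) < (Module.finrank ℝ E - 1 + n : ℕ) :=
    neg_one_lt_zero.trans_le (Nat.cast_nonneg _)
  refine (integrableOn_rpow_mul_exp_neg_mul_sq hb hs).congr_fun (fun y _ => ?_) measurableSet_Ioi
  simp only [Real.rpow_natCast, pow_add, smul_eq_mul, mul_assoc]

theorem integral_comp_norm_smul_self_eq_zero [MeasurableSpace E] [MeasurableNeg E]
    (μ : Measure E) [μ.IsNegInvariant] (f : ℝ → ℝ) : ∫ v, f ‖v‖ • v ∂μ = 0 := by
  have h := integral_neg_eq_self (fun v : E => f ‖v‖ • v) μ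
  simp only [norm_neg, smul_neg, integral_neg] at h
  have h2 : (2 : ℝ) • ∫ v, f ‖v‖ • v ∂μ = 0 := by
    rw [two_smul]; nth_rewrite 1 [← h]; exact neg_add_cancel _
  exact (smul_eq_zero.mp h2).resolve_left two_ne_zero

end GaussianOnNormedSpace

theorem gauss_eq (s : ℝ) (v : E2) :
    gauss s v = (2 * π * s)⁻¹ * rexp (-(2 * s)⁻¹ * ‖v‖ ^ 2) := by
  rw [gauss, neg_div, div_eq_inv_mul, neg_mul]

theorem gauss_nonneg_s19 {s : ℝ} (hs : 0 < s) (v : E2) : 0 ≤ gauss s v := by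
  unfold gauss; positivity

theorem integrable_gauss {s : ℝ} (hs : 0 < s) : Integrable (gauss s) := by
  have h := (integrable_norm_pow_mul_exp_neg_mul_sq_norm (volume : Measure E2)
    (b := (2 * s)⁻¹) (by positivity) 0).const_mul (2 * π * s)⁻¹
  simpa only [pow_zero, one_mul, ← gauss_eq] using h

theorem integrable_gauss_smul_self {s : ℝ} (hs : 0 < s) :
    Integrable fun v : E2 => gauss s v • v := by
  have h := (integrable_norm_pow_mul_exp_neg_mul_sq_norm (volume : Measure E2)
    (b := (2 * s)⁻¹) (by positivity) 1).const_mul (2 * π * s)⁻¹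
  refine (integrable_norm_iff (by unfold gauss; fun_prop)).mp (h.congr (.of_forall fun v => ?_))
  simp only [norm_smul, Real.norm_of_nonneg (gauss_nonneg_s19 hs v)]
  rw [gauss_eq, pow_one]
  ring

theorem integral_gauss {s : ℝ} (hs : 0 < s) : ∫ v : E2, gauss s v = 1 := by
  simp_rw [gauss_eq]
  rw [integral_const_mul, GaussianFourier.integral_rexp_neg_mul_sq_norm (by positivity),
    finrank_euclideanSpace_fin]
  field_simp
  norm_num

theorem integral_gauss_smul_self (s : ℝ) : ∫ v : E2, gauss s v • v = 0 :=
  integral_comp_norm_smul_self_eq_zero volume fun r => (2 * π * s)⁻¹ * rexp (-r ^ 2 / (2 * s))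

theorem integral_gauss_sub_smul {s : ℝ} (hs : 0 < s) (m : E2) :
    ∫ v : E2, gauss s (v - m) • v = m := by
  calc ∫ v : E2, gauss s (v - m) • v = ∫ v : E2, gauss s v • (v + m) := by
        simpa using integral_sub_right_eq_self (fun v : E2 => gauss s v • (v + m)) m
    _ = (∫ v : E2, gauss s v • v) + ∫ v : E2, gauss s v • m := by
        simp_rw [smul_add]
        exact integral_add (integrable_gauss_smul_self hs) ((integrable_gauss hs).smul_const m)
    _ = m := by
        rw [integral_gauss_smul_self, integral_smul_const, integral_gauss hs, one_smul, zero_add]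

theorem gauss_mul_gauss {s t : ℝ} (hs : 0 < s) (ht : 0 < t) (x y : E2) :
    gauss s y * gauss t (x - y)
      = gauss (s + t) x * gauss (s * t / (s + t)) (y - (s / (s + t)) • x) := by
  have hst : 0 < s + t := by positivity
  simp only [gauss, mul_mul_mul_comm _ (rexp _), ← Real.exp_add, norm_sub_sq_real, norm_smul,
    inner_smul_right, real_inner_comm x y, Real.norm_of_nonneg (div_pos hs hst).le]
  congr 1
  · field_simp
  · congr 1
    field_simp
    ring

theorem integral_gauss_smul_gauss_sub_smul {s t : ℝ} (hs : 0 < s) (ht : 0 < t) (x : E2) :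
    ∫ y : E2, gauss s y • gauss t (x - y) • y = (s / (s + t) * gauss (s + t) x) • x := by
  simp_rw [smul_smul, gauss_mul_gauss hs ht, mul_smul]
  rw [integral_smul, integral_gauss_sub_smul (by positivity), smul_comm]

theorem gauss_le {t : ℝ} (ht : 0 < t) (v : E2) : gauss t v ≤ (2 * π * t)⁻¹ := by
  rw [gauss]
  refine mul_le_of_le_one_right (by positivity) (Real.exp_le_one_iff.mpr ?_)
  rw [neg_div]
  exact neg_nonpos.mpr (by positivity)

theorem norm_mul_gauss_le {t : ℝ} (ht : 0 < t) (v : E2) :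
    ‖v‖ * gauss t v ≤ (2 * π * t)⁻¹ * (1 + 2 * t) := by
  have hle : ‖v‖ ≤ (1 + 2 * t) * rexp (‖v‖ ^ 2 / (2 * t)) :=
    calc ‖v‖ ≤ 1 + ‖v‖ ^ 2 := by nlinarith [sq_nonneg (‖v‖ - 1)]
      _ ≤ 1 + ‖v‖ ^ 2 + (2 * t + ‖v‖ ^ 2 / (2 * t)) := by
          have : 0 ≤ 2 * t + ‖v‖ ^ 2 / (2 * t) := by positivity
          linarith
      _ = (1 + 2 * t) * (1 + ‖v‖ ^ 2 / (2 * t)) := by field_simp; ring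
      _ ≤ (1 + 2 * t) * rexp (‖v‖ ^ 2 / (2 * t)) := by
          gcongr
          linarith [Real.add_one_le_exp (‖v‖ ^ 2 / (2 * t))]
  rw [gauss, neg_div, Real.exp_neg, mul_left_comm, ← div_eq_mul_inv]
  gcongr
  exact (div_le_iff₀ (Real.exp_pos _)).mpr hle

theorem norm_gauss_sub_smul_le {t : ℝ} (ht : 0 < t) (x y : E2) :
    ‖gauss t (x - y) • y‖ ≤ (2 * π * t)⁻¹ * (‖x‖ + 1 + 2 * t) := by
  rw [norm_smul, Real.norm_of_nonneg (gauss_nonneg_s19 ht _)]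
  calc gauss t (x - y) * ‖y‖ ≤ gauss t (x - y) * (‖x‖ + ‖x - y‖) :=
        mul_le_mul_of_nonneg_left (by simpa using norm_sub_le x (x - y)) (gauss_nonneg_s19 ht _)
    _ = gauss t (x - y) * ‖x‖ + ‖x - y‖ * gauss t (x - y) := by ring
    _ ≤ (2 * π * t)⁻¹ * ‖x‖ + (2 * π * t)⁻¹ * (1 + 2 * t) :=
        add_le_add (mul_le_mul_of_nonneg_right (gauss_le ht _) (norm_nonneg x))
          (norm_mul_gauss_le ht _)
    _ = (2 * π * t)⁻¹ * (‖x‖ + 1 + 2 * t) := by ring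

theorem besselK0_eq_integral_exp_mul_gauss {ϑ : ℝ} (hϑ : 0 < ϑ) (y : E2) :
    besselK0 (Real.sqrt (2 * ϑ) * ‖y‖)
      = π * ∫ s in Ioi (0 : ℝ), rexp (-ϑ * s) * gauss s y := by
  have hz : (Real.sqrt (2 * ϑ) * ‖y‖) ^ 2 = 2 * ϑ * ‖y‖ ^ 2 := by
    rw [mul_pow, Real.sq_sqrt (by positivity)]
  have hsub := integral_comp_mul_left_Ioi
    (fun a => a⁻¹ * rexp (-a - (Real.sqrt (2 * ϑ) * ‖y‖) ^ 2 / (4 * a))) 0 hϑ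
  rw [mul_zero, eq_inv_smul_iff₀ hϑ.ne'] at hsub
  rw [besselK0, ← hsub, smul_eq_mul, ← integral_const_mul, ← integral_const_mul,
    ← integral_const_mul]
  refine setIntegral_congr_fun measurableSet_Ioi fun s (hs : 0 < s) => ?_
  rw [gauss, hz, show -(ϑ * s) - 2 * ϑ * ‖y‖ ^ 2 / (4 * (ϑ * s)) = -ϑ * s + -‖y‖ ^ 2 / (2 * s) by
    field_simp; ring, Real.exp_add]
  field_simp

/- `‖g_t(x - y) y‖` is bounded in `y`, so the `y`-integral of the norm is `O(e^{-ϑs})`. -/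
theorem integrable_exp_mul_gauss_smul_gauss_sub_smul {t ϑ : ℝ} (ht : 0 < t) (hϑ : 0 < ϑ)
    (x : E2) :
    Integrable (fun p : E2 × ℝ => (π * rexp (-ϑ * p.2) * gauss p.2 p.1) • gauss t (x - p.1) • p.1)
      (volume.prod (volume.restrict (Ioi 0))) := by
  set C := (2 * π * t)⁻¹ * (‖x‖ + 1 + 2 * t)
  have hmeas : AEStronglyMeasurable
      (fun p : E2 × ℝ => (π * rexp (-ϑ * p.2) * gauss p.2 p.1) • gauss t (x - p.1) • p.1)
      (volume.prod (volume.restrict (Ioi 0))) := by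
    unfold gauss; fun_prop
  rw [integrable_prod_iff' hmeas, ae_restrict_iff' measurableSet_Ioi]
  refine ⟨.of_forall fun s (hs : 0 < s) => ?_, ?_⟩
  · exact ((integrable_gauss hs).const_mul (π * rexp (-ϑ * s))).smul_bdd C
      (by unfold gauss; fun_prop) (.of_forall (norm_gauss_sub_smul_le ht x))
  refine ((exp_neg_integrableOn_Ioi 0 hϑ).const_mul (π * C)).mono'
    hmeas.norm.prod_swap.integral_prod_right' ((ae_restrict_iff' measurableSet_Ioi).mpr
      (.of_forall fun s (hs : 0 < s) => ?_))
  have hnorm : ∀ y : E2, ‖(π * rexp (-ϑ * s) * gauss s y) • gauss t (x - y) • y‖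
      ≤ π * rexp (-ϑ * s) * gauss s y * C := fun y => by
    rw [norm_smul, Real.norm_of_nonneg (by have := gauss_nonneg_s19 hs y; positivity)]
    exact mul_le_mul_of_nonneg_left (norm_gauss_sub_smul_le ht x y)
      (by have := gauss_nonneg_s19 hs y; positivity)
  calc ‖∫ y : E2, ‖(π * rexp (-ϑ * s) * gauss s y) • gauss t (x - y) • y‖‖
      = ∫ y : E2, ‖(π * rexp (-ϑ * s) * gauss s y) • gauss t (x - y) • y‖ :=
        Real.norm_of_nonneg (integral_nonneg fun _ => norm_nonneg _)
    _ ≤ ∫ y : E2, π * rexp (-ϑ * s) * gauss s y * C :=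
        integral_mono_of_nonneg (.of_forall fun _ => norm_nonneg _)
          (((integrable_gauss hs).const_mul _).mul_const _) (.of_forall hnorm)
    _ = π * C * rexp (-ϑ * s) := by
        rw [integral_mul_const, integral_const_mul, integral_gauss hs]
        ring

theorem integral_besselK0_mul_gauss_sub_smul {t ϑ : ℝ} (ht : 0 < t) (hϑ : 0 < ϑ) (x : E2) :
    ∫ y : E2, (besselK0 (Real.sqrt (2 * ϑ) * ‖y‖) * gauss t (x - y)) • y
      = (∫ s in Ioi (0 : ℝ), π * rexp (-ϑ * s) * (s / (s + t) * gauss (s + t) x)) • x := by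
  calc ∫ y : E2, (besselK0 (Real.sqrt (2 * ϑ) * ‖y‖) * gauss t (x - y)) • y
      = ∫ y : E2, ∫ s in Ioi (0 : ℝ),
          (π * rexp (-ϑ * s) * gauss s y) • gauss t (x - y) • y := by
        refine integral_congr_ae (.of_forall fun y => ?_)
        dsimp only
        rw [mul_smul, besselK0_eq_integral_exp_mul_gauss hϑ, ← integral_const_mul,
          ← integral_smul_const]
        simp only [mul_assoc]
    _ = ∫ s in Ioi (0 : ℝ), ∫ y : E2,
          (π * rexp (-ϑ * s) * gauss s y) • gauss t (x - y) • y :=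
        integral_integral_swap (integrable_exp_mul_gauss_smul_gauss_sub_smul ht hϑ x)
    _ = ∫ s in Ioi (0 : ℝ), (π * rexp (-ϑ * s) * (s / (s + t) * gauss (s + t) x)) • x := by
        refine setIntegral_congr_fun measurableSet_Ioi fun s (hs : 0 < s) => ?_
        simp_rw [mul_smul (π * rexp (-ϑ * s))]
        rw [integral_smul, integral_gauss_smul_gauss_sub_smul hs ht, smul_smul]
    _ = _ := integral_smul_const _ x

theorem integrableOn_Ioi_rpow_mul_exp_neg_sub_div {y p : ℝ} (hy : 0 < y) (hp : p ≤ 0) (z : ℝ) :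
    IntegrableOn (fun a : ℝ => a ^ p * rexp (-a - z ^ 2 / (4 * a))) (Ioi y) := by
  refine ((exp_neg_integrableOn_Ioi y one_pos).const_mul (y ^ p)).mono'
    (Measurable.aestronglyMeasurable (by fun_prop)) ?_
  filter_upwards [ae_restrict_mem measurableSet_Ioi] with a (ha : y < a)
  have ha0 : 0 < a := hy.trans ha
  rw [Real.norm_of_nonneg (by positivity), neg_one_mul]
  refine mul_le_mul (Real.rpow_le_rpow_of_nonpos hy ha.le hp) (Real.exp_le_exp.mpr ?_)
    (by positivity) (by positivity)
  have : 0 ≤ z ^ 2 / (4 * a) := by positivity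
  linarith

theorem integral_Ioi_sub_div_sq_mul_exp_eq_besselKInc {y z : ℝ} (hy : 0 < y) (hz : z ≠ 0) :
    1 / 2 * ∫ a in Ioi y, (a - y) / a ^ 2 * rexp (-a - z ^ 2 / (4 * a))
      = besselKInc 0 z y - 2 * y / z * besselKInc 1 z y := by
  have hpt : ∀ a ∈ Ioi y, (a - y) / a ^ 2 * rexp (-a - z ^ 2 / (4 * a))
      = a ^ (-(0 : ℝ) - 1) * rexp (-a - z ^ 2 / (4 * a))
        - y * (a ^ (-(1 : ℝ) - 1) * rexp (-a - z ^ 2 / (4 * a))) := fun a (ha : y < a) => by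
    have ha0 : 0 < a := hy.trans ha
    rw [show -(0 : ℝ) - 1 = -1 by norm_num, show -(1 : ℝ) - 1 = -(2 : ℕ) by norm_num,
      Real.rpow_neg_one, Real.rpow_neg ha0.le, Real.rpow_natCast]
    field_simp
  rw [setIntegral_congr_fun measurableSet_Ioi hpt,
    integral_sub (integrableOn_Ioi_rpow_mul_exp_neg_sub_div hy (by norm_num) z)
      ((integrableOn_Ioi_rpow_mul_exp_neg_sub_div hy (by norm_num) z).const_mul y),
    integral_const_mul, besselKInc, besselKInc, Real.rpow_zero, Real.rpow_one]
  set J₀ := ∫ a in Ioi y, a ^ (-(0 : ℝ) - 1) * rexp (-a - z ^ 2 / (4 * a))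
  set J₁ := ∫ a in Ioi y, a ^ (-(1 : ℝ) - 1) * rexp (-a - z ^ 2 / (4 * a))
  field_simp

theorem integral_exp_mul_gauss_add {t ϑ : ℝ} (ht : 0 < t) (hϑ : 0 < ϑ) (x : E2) :
    ∫ s in Ioi (0 : ℝ), π * rexp (-ϑ * s) * (s / (s + t) * gauss (s + t) x)
      = rexp (ϑ * t) * (1 / 2 * ∫ a in Ioi (ϑ * t), (a - ϑ * t) / a ^ 2 *
          rexp (-a - (Real.sqrt (2 * ϑ) * ‖x‖) ^ 2 / (4 * a))) := by
  have himage : (fun s => ϑ * (s + t)) '' Ioi 0 = Ioi (ϑ * t) := by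
    rw [← image_image (ϑ * ·) (· + t), image_add_const_Ioi, zero_add, image_mul_left_Ioi hϑ]
  have hderiv : ∀ s ∈ Ioi (0 : ℝ), HasDerivWithinAt (fun s => ϑ * (s + t)) ϑ (Ioi 0) s :=
    fun s _ => by simpa using (((hasDerivAt_id s).add_const t).const_mul ϑ).hasDerivWithinAt
  have hinj : InjOn (fun s => ϑ * (s + t)) (Ioi 0) :=
    fun a _ b _ hab => by simpa [hϑ.ne'] using hab
  rw [← himage, integral_image_eq_integral_abs_deriv_smul measurableSet_Ioi hderiv hinj,
    ← integral_const_mul, ← integral_const_mul]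
  refine setIntegral_congr_fun measurableSet_Ioi fun s (hs : 0 < s) => ?_
  have hst : 0 < s + t := by positivity
  rw [gauss, abs_of_pos hϑ, smul_eq_mul, mul_pow _ ‖x‖, Real.sq_sqrt (by positivity),
    show -(ϑ * (s + t)) - 2 * ϑ * ‖x‖ ^ 2 / (4 * (ϑ * (s + t)))
      = -ϑ * s + -‖x‖ ^ 2 / (2 * (s + t)) + -(ϑ * t) by field_simp; ring,
    Real.exp_add, Real.exp_add, Real.exp_neg (ϑ * t)]
  field_simp
  ring

/-- For `t, ϑ > 0` and `x ≠ 0`, the vector-valued identity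
`∫ y K₀(√(2ϑ)‖y‖) g_t(x−y) dy
  = e^{ϑt} ( K₀(√(2ϑ)‖x‖, ϑt) x − √(2ϑ) t K₁(√(2ϑ)‖x‖, ϑt) x/‖x‖ )` holds. -/
theorem hat_besselK0_convolution (t ϑ : ℝ) (ht : 0 < t) (hϑ : 0 < ϑ)
    (x : E2) (hx : x ≠ 0) :
    (∫ y : E2, (besselK0 (Real.sqrt (2 * ϑ) * ‖y‖) * gauss t (x - y)) • y)
      = Real.exp (ϑ * t) •
          (besselKInc 0 (Real.sqrt (2 * ϑ) * ‖x‖) (ϑ * t) • x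
            - (Real.sqrt (2 * ϑ) * t * besselKInc 1 (Real.sqrt (2 * ϑ) * ‖x‖) (ϑ * t))
                • (‖x‖⁻¹ • x)) := by
  have hx' : 0 < ‖x‖ := norm_pos_iff.mpr hx
  rw [integral_besselK0_mul_gauss_sub_smul ht hϑ x, integral_exp_mul_gauss_add ht hϑ x,
    integral_Ioi_sub_div_sq_mul_exp_eq_besselKInc (by positivity) (by positivity),
    smul_sub, smul_smul, smul_smul, smul_smul, ← sub_smul]
  congr 1
  have hcoef : 2 * (ϑ * t) / (Real.sqrt (2 * ϑ) * ‖x‖) = Real.sqrt (2 * ϑ) * t * ‖x‖⁻¹ := by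
    rw [div_eq_iff (by positivity), mul_mul_mul_comm, inv_mul_cancel₀ hx'.ne', mul_one,
      mul_right_comm, Real.mul_self_sqrt (by positivity)]
    ring
  rw [hcoef]
  ring
end
end
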